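/- For any theta in R^d with ||theta||_2 ≤ rho, the occupancy measure mu_theta of the policy pi_{Phi theta} satisfies ||Psi^T mu_theta - Psi^T Phi theta||_1 ≤ ||Psi||_inf (2 V_1(theta) + V_2(theta))/(1 - gamma), where V_1(theta) = ||[Phi theta]_-||_1 and V_2(theta) = ||(B - gamma P)^T Phi theta - nu_0||_1. -/

import Mathlib

open BigOperators Matrix

/-- The matrix `Mᵖ` encoding a stationary Markov policy. -/
def policyMatrix {S A : Type*} [DecidableEq S] (π : S → A → ℝ) : Matrix S (S × A) ℝ :=
  fun x q => if q.1 = x then π x q.2 else 0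

/-- The binary matrix `B` with `B_{(x,a),x'} = 1` iff `x = x'`. -/
def flowB {S A : Type*} [DecidableEq S] : Matrix (S × A) S ℝ :=
  fun q x => if q.1 = x then 1 else 0

/-- The policy obtained by statewise normalization of the positive part of `u`. -/
noncomputable def posPolicy {S A : Type*} [Fintype A] (u : S × A → ℝ) : S → A → ℝ :=
  fun x a =>
    if (∑ a' : A, max (u (x, a')) 0) = 0 then (Fintype.card A : ℝ)⁻¹
    else max (u (x, a)) 0 / ∑ a' : A, max (u (x, a')) 0

set_option linter.unusedSectionVars false
section Aux
variable {S A : Type*} [Fintype S] [Fintype A] [DecidableEq S] [DecidableEq A] [Nonempty A]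

lemma posPolicy_nonneg (u : S × A → ℝ) (x : S) (a : A) : 0 ≤ posPolicy u x a := by
  unfold posPolicy
  split
  · positivity
  · exact div_nonneg (le_max_right _ _) (Finset.sum_nonneg fun _ _ => le_max_right _ _)

lemma posPolicy_sum (u : S × A → ℝ) (x : S) : ∑ a, posPolicy u x a = 1 := by
  unfold posPolicy
  by_cases h : (∑ a' : A, max (u (x, a')) 0) = 0
  · simp only [h, if_true, Finset.sum_const, Finset.card_univ, nsmul_eq_mul]
    rw [mul_inv_cancel₀]
    exact Nat.cast_ne_zero.mpr Fintype.card_ne_zero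
  · simp only [h, if_false]
    rw [← Finset.sum_div, div_self h]

lemma posPolicy_mul (u : S × A → ℝ) (x : S) (a : A) :
    posPolicy u x a * (∑ a' : A, max (u (x, a')) 0) = max (u (x, a)) 0 := by
  unfold posPolicy
  by_cases h : (∑ a' : A, max (u (x, a')) 0) = 0
  · rw [if_pos h, h, mul_zero]
    exact ((Finset.sum_eq_zero_iff_of_nonneg
      (fun a' _ => le_max_right (u (x, a')) 0)).mp h a (Finset.mem_univ a)).symm
  · rw [if_neg h]
    exact div_mul_cancel₀ _ h

lemma vecMul_policyMatrix (π : S → A → ℝ) (w : S → ℝ) (q : S × A) :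
    (w ᵥ* policyMatrix π) q = w q.1 * π q.1 q.2 := by
  simp [Matrix.vecMul, dotProduct, policyMatrix]

lemma policyMatrix_row_sum (π : S → A → ℝ) (hπ : ∀ x, ∑ a, π x a = 1) (x : S) :
    ∑ q : S × A, policyMatrix π x q = 1 := by
  rw [Fintype.sum_prod_type]
  simp only [policyMatrix]
  rw [Finset.sum_eq_single x]
  · simp [hπ x]
  · intro y _ hy; simp [hy]
  · simp

lemma vecMul_stoch {n m : Type*} [Fintype n] [Fintype m] (M : Matrix n m ℝ)
    (hM0 : ∀ i j, 0 ≤ M i j) (hM1 : ∀ i, ∑ j, M i j = 1)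
    (v : n → ℝ) (hv0 : ∀ i, 0 ≤ v i) (hv1 : ∑ i, v i = 1) :
    (∀ j, 0 ≤ (v ᵥ* M) j) ∧ ∑ j, (v ᵥ* M) j = 1 := by
  constructor
  · intro j
    simp only [Matrix.vecMul, dotProduct]
    exact Finset.sum_nonneg fun i _ => mul_nonneg (hv0 i) (hM0 i j)
  · simp only [Matrix.vecMul, dotProduct]
    rw [Finset.sum_comm]
    simp_rw [← Finset.mul_sum]
    simp [hM1, hv1]

end Aux

/-- For any `θ` with `‖θ‖₂ ≤ ρ`, the occupancy measure `μ_θ` of the policy `π_{Φθ}` satisfies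
`‖Ψᵀμ_θ - ΨᵀΦθ‖₁ ≤ ‖Ψ‖∞ (2V₁(θ) + V₂(θ))/(1-γ)`, where `V₁(θ) = ‖[Φθ]₋‖₁` and
`V₂(θ) = ‖(B-γP)ᵀΦθ - ν₀‖₁`, and `NΨ` bounds the max-row-sum norm `‖Ψ‖∞`. -/
theorem feature_expectation_violation_bound
    {S A : Type*} [Fintype S] [Fintype A] [DecidableEq S] [DecidableEq A] [Nonempty A]
    (d nc : ℕ)
    (P : Matrix (S × A) S ℝ) (ν0 : S → ℝ) (γ : ℝ)
    (hγ : 0 < γ ∧ γ < 1)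
    (hP : ∀ q x, 0 ≤ P q x) (hPs : ∀ q, ∑ x, P q x = 1)
    (hν : ∀ x, 0 ≤ ν0 x) (hνs : ∑ x, ν0 x = 1)
    (Ψ : Matrix (S × A) (Fin nc) ℝ) (Φ : Matrix (S × A) (Fin d) ℝ)
    (NΨ : ℝ) (hNΨ : ∀ q : S × A, ∑ i, |Ψ q i| ≤ NΨ)
    (ρ : ℝ) (θ : Fin d → ℝ) (hθ : Real.sqrt (∑ j, θ j ^ 2) ≤ ρ)
    (μθ : S × A → ℝ)
    (hμ : ∀ q, μθ q = ∑' t : ℕ,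
        γ ^ t * (ν0 ᵥ* (policyMatrix (posPolicy (Φ *ᵥ θ)) *
          (P * policyMatrix (posPolicy (Φ *ᵥ θ))) ^ t)) q) :
    ∑ i, |∑ q : S × A, Ψ q i * (μθ q - (Φ *ᵥ θ) q)| ≤
      NΨ * (2 * (∑ q : S × A, max 0 (-((Φ *ᵥ θ) q)))
            + ∑ x : S, |((flowB - γ • P)ᵀ *ᵥ (Φ *ᵥ θ)) x - ν0 x|) / (1 - γ) := by
  classical
  obtain ⟨hγ0, hγ1⟩ := hγ
  have h1γ : (0:ℝ) < 1 - γ := by linarith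
  rcases isEmpty_or_nonempty S with hS | hS
  · simp [Finset.univ_eq_empty]
  set u : S × A → ℝ := Φ *ᵥ θ with hu
  set π : S → A → ℝ := posPolicy u with hπdef
  set M : Matrix S (S × A) ℝ := policyMatrix π with hMdef
  have hπ0 : ∀ x a, 0 ≤ π x a := posPolicy_nonneg u
  have hπ1 : ∀ x, ∑ a, π x a = 1 := posPolicy_sum u
  have hM0 : ∀ x q, 0 ≤ M x q := by
    intro x q; simp only [hMdef, policyMatrix]; split
    · exact hπ0 _ _
    · exact le_refl 0
  have hMs : ∀ x, ∑ q : S × A, M x q = 1 := policyMatrix_row_sum π hπ1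
  have hMP0 : ∀ x y, 0 ≤ (M * P) x y := fun x y =>
    Finset.sum_nonneg fun q _ => mul_nonneg (hM0 x q) (hP q y)
  have hMPs : ∀ x, ∑ y, (M * P) x y = 1 := by
    intro x
    simp only [Matrix.mul_apply]
    rw [Finset.sum_comm]
    simp_rw [← Finset.mul_sum]
    simp [hPs, hMs]
  -- the state occupancy at each step
  set w : ℕ → S → ℝ := fun t => ν0 ᵥ* (M * P) ^ t with hwdef
  have hw0 : w 0 = ν0 := by simp [hwdef]
  have hwsucc : ∀ t, w (t + 1) = w t ᵥ* (M * P) := by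
    intro t
    simp only [hwdef, pow_succ, ← Matrix.vecMul_vecMul]
  have hw : ∀ t, (∀ x, 0 ≤ w t x) ∧ ∑ x, w t x = 1 := by
    intro t
    induction t with
    | zero => exact ⟨fun x => by rw [hw0]; exact hν x, by rw [hw0]; exact hνs⟩
    | succ t ih =>
      rw [hwsucc]
      exact vecMul_stoch (M * P) hMP0 hMPs (w t) ih.1 ih.2
  have hwle : ∀ t x, w t x ≤ 1 := by
    intro t x
    rw [← (hw t).2]
    exact Finset.single_le_sum (fun y _ => (hw t).1 y) (Finset.mem_univ x)
  have hgeo : Summable (fun t : ℕ => γ ^ t) :=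
    summable_geometric_of_lt_one hγ0.le hγ1
  have hsumw : ∀ x, Summable (fun t => γ ^ t * w t x) := by
    intro x
    refine Summable.of_nonneg_of_le (fun t => mul_nonneg (by positivity) ((hw t).1 x))
      (fun t => ?_) hgeo
    calc γ ^ t * w t x ≤ γ ^ t * 1 := by
          exact mul_le_mul_of_nonneg_left (hwle t x) (by positivity)
      _ = γ ^ t := mul_one _
  set Dv : S → ℝ := fun x => ∑' t, γ ^ t * w t x with hDvdef
  -- rewrite μθ
  have hkey : ∀ t, M * (P * M) ^ t = (M * P) ^ t * M := by
    intro t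
    induction t with
    | zero => simp
    | succ t ih =>
      rw [pow_succ', pow_succ']
      simp only [Matrix.mul_assoc, ih]
  have hwM : ∀ t (q : S × A), (ν0 ᵥ* (M * (P * M) ^ t)) q = w t q.1 * π q.1 q.2 := by
    intro t q
    rw [hkey, ← Matrix.vecMul_vecMul]
    exact vecMul_policyMatrix π (w t) q
  have hμπ : ∀ q, μθ q = π q.1 q.2 * Dv q.1 := by
    intro q
    rw [hμ q]
    simp_rw [hwM]
    calc (∑' t, γ ^ t * (w t q.1 * π q.1 q.2))
        = ∑' t, (γ ^ t * w t q.1) * π q.1 q.2 := tsum_congr fun t => by ring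
      _ = (∑' t, γ ^ t * w t q.1) * π q.1 q.2 := tsum_mul_right
      _ = π q.1 q.2 * Dv q.1 := mul_comm _ _
  -- bounds on π
  have hπle : ∀ x a, π x a ≤ 1 := by
    intro x a
    rw [← hπ1 x]
    exact Finset.single_le_sum (fun a' _ => hπ0 x a') (Finset.mem_univ a)
  have ha0 : ∀ (t : ℕ) (q : S × A), 0 ≤ γ ^ t * (w t q.1 * π q.1 q.2) := fun t q =>
    mul_nonneg (by positivity) (mul_nonneg ((hw t).1 q.1) (hπ0 _ _))
  have hale : ∀ (t : ℕ) (q : S × A), γ ^ t * (w t q.1 * π q.1 q.2) ≤ γ ^ t := by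
    intro t q
    have h1 : w t q.1 * π q.1 q.2 ≤ 1 :=
      mul_le_one₀ (hwle t q.1) (hπ0 _ _) (hπle _ _)
    calc γ ^ t * (w t q.1 * π q.1 q.2) ≤ γ ^ t * 1 :=
          mul_le_mul_of_nonneg_left h1 (by positivity)
      _ = γ ^ t := mul_one _
  -- the Bellman flow equation
  have hflow : ∀ x, Dv x = ν0 x + γ * (∑ q : S × A, μθ q * P q x) := by
    intro x
    have hsum2 : ∀ q : S × A, Summable (fun t => (γ ^ t * (w t q.1 * π q.1 q.2)) * P q x) := by
      intro q
      refine Summable.of_nonneg_of_le (fun t => mul_nonneg (ha0 t q) (hP q x)) (fun t => ?_)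
        (hgeo.mul_right (P q x))
      exact mul_le_mul_of_nonneg_right (hale t q) (hP q x)
    have h1 : ∑ q : S × A, μθ q * P q x = ∑' t : ℕ, γ ^ t * w (t + 1) x := by
      have h2 : ∀ q : S × A, μθ q * P q x
          = ∑' t : ℕ, (γ ^ t * (w t q.1 * π q.1 q.2)) * P q x := by
        intro q
        rw [hμ q]
        simp_rw [hwM]
        exact (tsum_mul_right).symm
      simp_rw [h2]
      rw [← Summable.tsum_finsetSum (fun q _ => hsum2 q)]
      refine tsum_congr fun t => ?_
      have e1 : ∑ q : S × A, (γ ^ t * (w t q.1 * π q.1 q.2)) * P q x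
          = γ ^ t * ∑ q : S × A, (w t ᵥ* M) q * P q x := by
        rw [Finset.mul_sum]
        refine Finset.sum_congr rfl fun q _ => ?_
        rw [vecMul_policyMatrix]; ring
      rw [e1]
      congr 1
      have e2 : ∑ q : S × A, (w t ᵥ* M) q * P q x = ((w t ᵥ* M) ᵥ* P) x := by
        simp [Matrix.vecMul, dotProduct]
      rw [e2, Matrix.vecMul_vecMul, ← hwsucc]
    rw [h1]
    have h3 : Dv x = γ ^ 0 * w 0 x + ∑' t : ℕ, γ ^ (t + 1) * w (t + 1) x :=
      Summable.tsum_eq_zero_add (hsumw x)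
    rw [hDvdef] at h3 ⊢
    rw [h3, hw0, pow_zero, one_mul]
    congr 1
    rw [← tsum_mul_left]
    exact tsum_congr fun t => by ring
  -- finite part
  set sp : S → ℝ := fun x => ∑ a, max (u (x, a)) 0 with hsdef
  have hπs : ∀ q : S × A, π q.1 q.2 * sp q.1 = max (u q) 0 := by
    intro q
    have := posPolicy_mul u q.1 q.2
    simpa using this
  have hmax : ∀ r : ℝ, max r 0 - r = max 0 (-r) := by
    intro r
    rcases le_total 0 r with h | h
    · rw [max_eq_left h, max_eq_left (neg_nonpos.mpr h)]; ring
    · rw [max_eq_right h, max_eq_right (neg_nonneg.mpr h)]; ring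
  have hdecomp : ∀ q, μθ q - u q = π q.1 q.2 * (Dv q.1 - sp q.1) + max 0 (-u q) := by
    intro q
    rw [hμπ q]
    linear_combination hπs q + hmax (u q)
  have he : ∀ x, ((flowB - γ • P)ᵀ *ᵥ u) x
      = (∑ a, u (x, a)) - γ * ∑ q : S × A, u q * P q x := by
    intro x
    simp only [Matrix.mulVec, dotProduct, Matrix.transpose_apply, Matrix.sub_apply,
      Matrix.smul_apply, smul_eq_mul, sub_mul, Finset.sum_sub_distrib]
    congr 1
    · rw [Fintype.sum_prod_type]
      simp only [flowB]
      rw [Finset.sum_eq_single x]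
      · simp
      · intro y _ hy; simp [hy]
      · simp
    · rw [Finset.mul_sum]
      exact Finset.sum_congr rfl fun q _ => by ring
  set V1 : ℝ := ∑ q : S × A, max 0 (-u q) with hV1
  set E2 : ℝ := ∑ x : S, |((flowB - γ • P)ᵀ *ᵥ u) x - ν0 x| with hE2
  set D1 : ℝ := ∑ q : S × A, |μθ q - u q| with hD1
  have hsx : ∀ x, sp x = (∑ a, u (x, a)) + ∑ a, max 0 (-u (x, a)) := by
    intro x
    rw [hsdef, ← Finset.sum_add_distrib]
    exact Finset.sum_congr rfl fun a _ => by linarith [hmax (u (x, a))]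
  have hDs : ∀ x, Dv x - sp x
      = γ * (∑ q : S × A, (μθ q - u q) * P q x) - (((flowB - γ • P)ᵀ *ᵥ u) x - ν0 x)
        - ∑ a, max 0 (-u (x, a)) := by
    intro x
    have hsub : ∑ q : S × A, (μθ q - u q) * P q x
        = (∑ q : S × A, μθ q * P q x) - ∑ q : S × A, u q * P q x := by
      rw [← Finset.sum_sub_distrib]
      exact Finset.sum_congr rfl fun q _ => sub_mul _ _ _
    rw [hflow x, he x, hsx x, hsub]
    ring
  have hstep1 : D1 ≤ (∑ x, |Dv x - sp x|) + V1 := by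
    rw [hD1, hV1]
    calc ∑ q : S × A, |μθ q - u q|
        ≤ ∑ q : S × A, (π q.1 q.2 * |Dv q.1 - sp q.1| + max 0 (-u q)) := by
          refine Finset.sum_le_sum fun q _ => ?_
          rw [hdecomp q]
          refine (abs_add_le _ _).trans ?_
          rw [abs_mul, abs_of_nonneg (hπ0 _ _), abs_of_nonneg (le_max_left 0 (-u q))]
      _ = (∑ x, ∑ a, π x a * |Dv x - sp x|) + ∑ q : S × A, max 0 (-u q) := by
          rw [Finset.sum_add_distrib, Fintype.sum_prod_type]
      _ = (∑ x, |Dv x - sp x|) + ∑ q : S × A, max 0 (-u q) := by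
          congr 1
          refine Finset.sum_congr rfl fun x _ => ?_
          rw [← Finset.sum_mul, hπ1 x, one_mul]
  have hstep2 : ∑ x, |Dv x - sp x| ≤ γ * D1 + E2 + V1 := by
    calc ∑ x, |Dv x - sp x|
        ≤ ∑ x, (γ * |∑ q : S × A, (μθ q - u q) * P q x|
            + |((flowB - γ • P)ᵀ *ᵥ u) x - ν0 x| + ∑ a, max 0 (-u (x, a))) := by
          refine Finset.sum_le_sum fun x _ => ?_
          rw [hDs x]
          refine (abs_sub _ _).trans ?_
          gcongr
          · refine (abs_sub _ _).trans ?_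
            gcongr
            rw [abs_mul, abs_of_nonneg hγ0.le]
          · rw [abs_of_nonneg (Finset.sum_nonneg fun a _ => le_max_left _ _)]
      _ = γ * (∑ x, |∑ q : S × A, (μθ q - u q) * P q x|) + E2 + V1 := by
          rw [Finset.sum_add_distrib, Finset.sum_add_distrib, Finset.mul_sum]
          congr 1
          rw [hV1, Fintype.sum_prod_type]
      _ ≤ γ * D1 + E2 + V1 := by
          gcongr
          calc ∑ x, |∑ q : S × A, (μθ q - u q) * P q x|
              ≤ ∑ x, ∑ q : S × A, |μθ q - u q| * P q x := by
                refine Finset.sum_le_sum fun x _ => ?_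
                refine (Finset.abs_sum_le_sum_abs _ _).trans ?_
                exact Finset.sum_le_sum fun q _ => by
                  rw [abs_mul, abs_of_nonneg (hP q x)]
            _ = ∑ q : S × A, |μθ q - u q| := by
                rw [Finset.sum_comm]
                refine Finset.sum_congr rfl fun q _ => ?_
                rw [← Finset.mul_sum, hPs q, mul_one]
            _ = D1 := hD1.symm
  have hD1bound : D1 ≤ (2 * V1 + E2) / (1 - γ) := by
    rw [le_div_iff₀ h1γ]
    nlinarith [hstep1, hstep2]
  haveI := hS
  have hNΨ0 : 0 ≤ NΨ :=
    le_trans (Finset.sum_nonneg fun i _ => abs_nonneg _) (hNΨ (Classical.arbitrary (S × A)))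
  calc ∑ i, |∑ q : S × A, Ψ q i * (μθ q - u q)|
      ≤ ∑ i, ∑ q : S × A, |Ψ q i * (μθ q - u q)| :=
        Finset.sum_le_sum fun i _ => Finset.abs_sum_le_sum_abs _ _
    _ = ∑ q : S × A, (∑ i, |Ψ q i|) * |μθ q - u q| := by
        rw [Finset.sum_comm]
        refine Finset.sum_congr rfl fun q _ => ?_
        rw [Finset.sum_mul]
        exact Finset.sum_congr rfl fun i _ => abs_mul _ _
    _ ≤ ∑ q : S × A, NΨ * |μθ q - u q| :=
        Finset.sum_le_sum fun q _ => mul_le_mul_of_nonneg_right (hNΨ q) (abs_nonneg _)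
    _ = NΨ * D1 := by rw [hD1, Finset.mul_sum]
    _ ≤ NΨ * ((2 * V1 + E2) / (1 - γ)) := mul_le_mul_of_nonneg_left hD1bound hNΨ0
    _ = NΨ * (2 * V1 + E2) / (1 - γ) := (mul_div_assoc _ _ _).symm
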